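/- arXiv:1705.05709 — 2 statements merged into one kernel-verified Lean document; each statement's English description precedes it below -/
import Mathlib

section
/- Let S be a subsemigroup of T_n, let X be an irredundant generating set for S, and let x ∈ X be such that rank(z_1 x z_2) < rank(x) for all z_1, z_2 ∈ X with z_1 ≥_J x and z_2 ≥_J x (products composed left to right). Then for all p, u, s ∈ S¹ and every y ∈ X with x J y, the element p x u y s is not J-equivalent to x (i.e., S¹(pxuys)S¹ ≠ S¹xS¹). -/
/-- The rank of a transformation of `Fin n`: the size of its image. -/
def trank {n : ℕ} (f : Fin n → Fin n) : ℕ := (Finset.univ.image f).card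

/-- The subsemigroup (of the full transformation monoid, with composition
written left to right, so the product `f * g` is `g ∘ f`) generated by a set
of transformations. -/
inductive SgClosure {α : Type*} (X : Set (α → α)) : (α → α) → Prop
  | base {f : α → α} : f ∈ X → SgClosure X f
  | comp {f g : α → α} : SgClosure X f → SgClosure X g → SgClosure X (g ∘ f)

/-- The set `S¹xS¹ = {x} ∪ xS ∪ Sx ∪ SxS`, with products composed left to
right (so the left-to-right product `a x b` is the function `b ∘ x ∘ a`). -/
def transIdeal {α : Type*} (S : Set (α → α)) (x : α → α) : Set (α → α) :=
  insert x ({h | ∃ a ∈ S, h = x ∘ a} ∪ {h | ∃ b ∈ S, h = b ∘ x} ∪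
    {h | ∃ a ∈ S, ∃ b ∈ S, h = b ∘ x ∘ a})

/-- The `J`-preorder on transformations relative to `S`: `x ≤_J y` iff
`S¹xS¹ ⊆ S¹yS¹`. -/
def JLE {α : Type*} (S : Set (α → α)) (x y : α → α) : Prop :=
  transIdeal S x ⊆ transIdeal S y

/-!
Products below are read left to right, as in the statement. If `x J pxuys`, then
`x = q·pxuys·r` with `q, r ∈ S¹`, i.e. `x = LxR` with `R = uysr ∈ S`. Substituting `y = αxβ`
(from `x J y`) gives `x = L'xR'` with `L' = qpxuα ∈ S`, and together `x = (LL')x(R'R)` with both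
outer factors in `S`. Splitting off the generator `z₁` at the end of `LL'` and the generator `z₂`
at the start of `R'R` gives `x = c(z₁xz₂)d`, so `z₁, z₂ ≥_J x` and
`rank x ≤ rank (z₁xz₂) < rank x`.
-/

section Rank

variable {n : ℕ}

lemma trank_comp_le_right (f g : Fin n → Fin n) : trank (g ∘ f) ≤ trank f := by
  unfold trank
  rw [Finset.image_comp]
  exact Finset.card_image_le

lemma trank_comp_le_left (f g : Fin n → Fin n) : trank (g ∘ f) ≤ trank g := by
  unfold trank
  apply Finset.card_le_card
  rw [Finset.image_comp]
  exact Finset.image_subset_image (Finset.subset_univ _)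

end Rank

section Ideal

variable {α : Type*} {S : Set (α → α)}

lemma comp_comp_mem (hS : ∀ f ∈ S, ∀ g ∈ S, g ∘ f ∈ S) {a b y : α → α}
    (ha : a ∈ insert id S) (hy : y ∈ S) (hb : b ∈ insert id S) : b ∘ y ∘ a ∈ S := by
  rcases ha with rfl | ha <;> rcases hb with rfl | hb
  · exact hy
  · exact hS y hy b hb
  · exact hS a ha y hy
  · exact hS _ (hS a ha y hy) b hb

lemma comp_mem_insert_id (hS : ∀ f ∈ S, ∀ g ∈ S, g ∘ f ∈ S) {f g : α → α}
    (hf : f ∈ insert id S) (hg : g ∈ insert id S) : g ∘ f ∈ insert id S := by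
  rcases hf with rfl | hf
  · exact hg
  · exact Or.inr (comp_comp_mem hS (Set.mem_insert id S) hf hg)

lemma mem_transIdeal_iff {x h : α → α} :
    h ∈ transIdeal S x ↔ ∃ a ∈ insert id S, ∃ b ∈ insert id S, h = b ∘ x ∘ a := by
  simp only [transIdeal, Set.mem_insert_iff, Set.mem_union, Set.mem_ofPred_eq]
  constructor
  · rintro (rfl | (⟨a, ha, rfl⟩ | ⟨b, hb, rfl⟩) | ⟨a, ha, b, hb, rfl⟩)
    · exact ⟨id, Or.inl rfl, id, Or.inl rfl, rfl⟩
    · exact ⟨a, Or.inr ha, id, Or.inl rfl, rfl⟩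
    · exact ⟨id, Or.inl rfl, b, Or.inr hb, rfl⟩
    · exact ⟨a, Or.inr ha, b, Or.inr hb, rfl⟩
  · rintro ⟨a, rfl | ha, b, rfl | hb, rfl⟩
    · exact Or.inl rfl
    · exact Or.inr (Or.inl (Or.inr ⟨b, hb, rfl⟩))
    · exact Or.inr (Or.inl (Or.inl ⟨a, ha, rfl⟩))
    · exact Or.inr (Or.inr ⟨a, ha, b, hb, rfl⟩)

lemma mem_transIdeal_self (x : α → α) : x ∈ transIdeal S x := Set.mem_insert x _

lemma JLE_of_mem_transIdeal (hS : ∀ f ∈ S, ∀ g ∈ S, g ∘ f ∈ S) {x z : α → α}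
    (hxz : x ∈ transIdeal S z) : JLE S x z := by
  obtain ⟨a, ha, b, hb, rfl⟩ := mem_transIdeal_iff.mp hxz
  intro h hh
  obtain ⟨a', ha', b', hb', rfl⟩ := mem_transIdeal_iff.mp hh
  exact mem_transIdeal_iff.mpr
    ⟨a ∘ a', comp_mem_insert_id hS ha' ha, b' ∘ b, comp_mem_insert_id hS hb hb', rfl⟩

end Ideal

namespace SgClosure

variable {α : Type*} {X : Set (α → α)}

lemma comp_mem :
    ∀ f ∈ {f | SgClosure X f}, ∀ g ∈ {f | SgClosure X f}, g ∘ f ∈ {f | SgClosure X f} :=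
  fun _ hf _ hg => comp hf hg

lemma exists_eq_comp_first {f : α → α} (hf : SgClosure X f) :
    ∃ z ∈ X, ∃ c ∈ insert id {g | SgClosure X g}, f = c ∘ z := by
  induction hf with
  | base hz => exact ⟨_, hz, id, Set.mem_insert _ _, rfl⟩
  | @comp f g _ hg ihf _ =>
    obtain ⟨z, hz, c, hc | hc, rfl⟩ := ihf
    · exact ⟨z, hz, g, Or.inr hg, by rw [hc]; rfl⟩
    · exact ⟨z, hz, g ∘ c, Or.inr (comp hc hg), rfl⟩

lemma exists_eq_comp_last {f : α → α} (hf : SgClosure X f) :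
    ∃ z ∈ X, ∃ c ∈ insert id {g | SgClosure X g}, f = z ∘ c := by
  induction hf with
  | base hz => exact ⟨_, hz, id, Set.mem_insert _ _, rfl⟩
  | @comp f g hf _ _ ihg =>
    obtain ⟨z, hz, c, hc | hc, rfl⟩ := ihg
    · exact ⟨z, hz, f, Or.inr hf, by rw [hc]; rfl⟩
    · exact ⟨z, hz, c ∘ f, Or.inr (comp hf hc), rfl⟩

end SgClosure

lemma ne_comp_comp_of_trank_lt {n : ℕ} {X : Set (Fin n → Fin n)} {x : Fin n → Fin n}
    (hxS : SgClosure X x)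
    (hrank : ∀ z₁ ∈ X, ∀ z₂ ∈ X, JLE {f | SgClosure X f} x z₁ → JLE {f | SgClosure X f} x z₂ →
      trank (z₂ ∘ x ∘ z₁) < trank x)
    {a b : Fin n → Fin n} (ha : SgClosure X a) (hb : SgClosure X b) : x ≠ b ∘ x ∘ a := by
  intro heq
  have hS := @SgClosure.comp_mem _ X
  obtain ⟨z₂, hz₂, d, hd, rfl⟩ := hb.exists_eq_comp_first
  obtain ⟨z₁, hz₁, c, hc, rfl⟩ := ha.exists_eq_comp_last
  have hxz₁ : x ∈ transIdeal {f | SgClosure X f} z₁ := mem_transIdeal_iff.mpr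
    ⟨c, hc, d ∘ z₂ ∘ x, Or.inr (comp_comp_mem hS (Or.inr hxS) (.base hz₂) hd), heq⟩
  have hxz₂ : x ∈ transIdeal {f | SgClosure X f} z₂ := mem_transIdeal_iff.mpr
    ⟨x ∘ z₁ ∘ c, Or.inr (comp_comp_mem hS hc (.base hz₁) (Or.inr hxS)), d, hd, heq⟩
  have hlt := hrank z₁ hz₁ z₂ hz₂ (JLE_of_mem_transIdeal hS hxz₁) (JLE_of_mem_transIdeal hS hxz₂)
  have hle : trank x ≤ trank (z₂ ∘ x ∘ z₁) := calc
    trank x = trank (d ∘ (z₂ ∘ x ∘ z₁) ∘ c) := congrArg trank heq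
    _ ≤ trank ((z₂ ∘ x ∘ z₁) ∘ c) := trank_comp_le_right _ _
    _ ≤ trank (z₂ ∘ x ∘ z₁) := trank_comp_le_left _ _
  exact hle.not_gt hlt

theorem stmt_8_general {n : ℕ} (S : Set (Fin n → Fin n))
    (X : Set (Fin n → Fin n)) (hXgen : {f | SgClosure X f} = S)
    (x : Fin n → Fin n) (hx : x ∈ X)
    (hrank : ∀ z₁ ∈ X, ∀ z₂ ∈ X, JLE S x z₁ → JLE S x z₂ →
      trank (z₂ ∘ x ∘ z₁) < trank x) :
    ∀ p ∈ insert id S, ∀ u ∈ insert id S, ∀ s ∈ insert id S, ∀ y ∈ X,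
      transIdeal S x = transIdeal S y →
      transIdeal S (s ∘ y ∘ u ∘ x ∘ p) ≠ transIdeal S x := by
  subst hXgen
  intro p hp u hu s hs y hy hxy hJ
  obtain ⟨a, ha, b, hb, hxeq⟩ := mem_transIdeal_iff.mp (hJ ▸ mem_transIdeal_self x)
  obtain ⟨α, hα, β, hβ, hyeq⟩ := mem_transIdeal_iff.mp (hxy ▸ mem_transIdeal_self y)
  have hxeq' : x = (b ∘ s ∘ β) ∘ x ∘ (α ∘ u ∘ x ∘ p ∘ a) := by rwa [hyeq] at hxeq
  have hx₂ : x = (b ∘ s ∘ y ∘ u ∘ b ∘ s ∘ β) ∘ x ∘ (α ∘ u ∘ x ∘ p ∘ a ∘ p ∘ a) :=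
    hxeq.trans (congrArg (fun w => (b ∘ s ∘ y ∘ u) ∘ w ∘ (p ∘ a)) hxeq')
  have hS := @SgClosure.comp_mem _ X
  have hbs : b ∘ s ∈ insert id _ := comp_mem_insert_id hS hs hb
  have hpa : p ∘ a ∈ insert id _ := comp_mem_insert_id hS ha hp
  have hpost : SgClosure X ((b ∘ s) ∘ y ∘ (u ∘ (b ∘ s) ∘ β)) :=
    comp_comp_mem hS (comp_mem_insert_id hS (comp_mem_insert_id hS hβ hbs) hu) (.base hy) hbs
  have hpre : SgClosure X ((α ∘ u) ∘ x ∘ ((p ∘ a) ∘ (p ∘ a))) :=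
    comp_comp_mem hS (comp_mem_insert_id hS hpa hpa) (.base hx) (comp_mem_insert_id hS hu hα)
  exact ne_comp_comp_of_trank_lt (.base hx) hrank hpre hpost hx₂

/-- Let `S ≤ T_n` with irredundant generating set `X`, and let `x ∈ X` satisfy
`rank (z₁ x z₂) < rank x` for all `z₁, z₂ ∈ X` with `z₁, z₂ ≥_J x`. Then for
all `p, u, s ∈ S¹` (formalized as `insert id S`, the identity playing the role
of the adjoined identity `1`) and every `y ∈ X` with `x J y`, the left-to-right
product `p x u y s` (the function `s ∘ y ∘ u ∘ x ∘ p`) is not `J`-equivalent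
to `x`. -/
theorem stmt_8 {n : ℕ} (S : Set (Fin n → Fin n))
    (hS : ∀ f ∈ S, ∀ g ∈ S, g ∘ f ∈ S)
    (X : Set (Fin n → Fin n)) (hXgen : {f | SgClosure X f} = S)
    (hXirr : ∀ Z, Z ⊂ X → {f | SgClosure Z f} ≠ S)
    (x : Fin n → Fin n) (hx : x ∈ X)
    (hrank : ∀ z₁ ∈ X, ∀ z₂ ∈ X, JLE S x z₁ → JLE S x z₂ →
      trank (z₂ ∘ x ∘ z₁) < trank x) :
    ∀ p ∈ insert id S, ∀ u ∈ insert id S, ∀ s ∈ insert id S, ∀ y ∈ X,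
      transIdeal S x = transIdeal S y →
      transIdeal S (s ∘ y ∘ u ∘ x ∘ p) ≠ transIdeal S x :=
  stmt_8_general S X hXgen x hx hrank
end

section
/- There exist constants c > 0 and ρ ∈ (0,1) such that for all n ≥ 1, the number of triples (x, y, z) ∈ T_n³ with rank(xyz) = rank(y) (where xyz is the composite: first x, then y, then z) is at most c·n^5·ρ^n·n^{3n}. Equivalently, the probability V_n-bar that three independent uniformly random transformations x, y, z ∈ T_n satisfy rank(xyz) = rank(y) is at most c·n^5·ρ^n, and hence tends to 0 exponentially fast as n → ∞. -/
/-!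
If `rank (xyz) = rank y`, then the image `S` of `xy` has `|S| = rank y` and `z` is injective
on `S`. Either `rank y ≤ n/4`: such a `y` is a map into some set of size at most `n/4`, so
there are at most `2^n (n/4)^n = 2^{-n} n^n` of them. Or `|S| > n/4`: then for fixed `x, y` the
map `z` is injective on a subset of `S` of size `m = ⌊n/4⌋ + 1`, which leaves at most
`n(n-1)⋯(n-m+1) · n^{n-m}` choices, and at least `(n-5)/8` of the factors `n - i` are at most
`7n/8`.
-/

open Finset

section Counting

variable {α β : Type*} [Fintype α] [DecidableEq α] [Fintype β] [DecidableEq β]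

theorem card_filter_card_image_le (k : ℕ) :
    #{f : α → β | #(univ.image f) ≤ k} ≤ 2 ^ Fintype.card β * k ^ Fintype.card α := by
  have hcover : ({f : α → β | #(univ.image f) ≤ k} : Finset _) ⊆
      ({S : Finset β | #S ≤ k} : Finset _).biUnion fun S => Fintype.piFinset fun _ => S := by
    intro f hf
    simp only [mem_filter, mem_univ, true_and] at hf
    simp only [mem_biUnion, mem_filter, mem_univ, true_and, Fintype.mem_piFinset]
    exact ⟨univ.image f, hf, fun a => mem_image_of_mem f (mem_univ a)⟩
  calc _ ≤ _ := card_le_card hcover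
    _ ≤ #({S : Finset β | #S ≤ k} : Finset _) * k ^ Fintype.card α :=
        card_biUnion_le_card_mul _ _ _ fun S hS => by
          rw [Fintype.card_piFinset, prod_const, card_univ]
          exact Nat.pow_le_pow_left (mem_filter.1 hS).2 _
    _ ≤ _ := by
        gcongr
        exact (card_filter_le _ _).trans_eq (by simp)

theorem card_filter_injOn_le (s : Finset α) :
    #{f : α → β | Set.InjOn f s} ≤
      (Fintype.card β).descFactorial #s * Fintype.card β ^ (Fintype.card α - #s) := by
  let split : {f : α → β // Set.InjOn f s} → (s ↪ β) × (↥sᶜ → β) := fun f =>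
    (⟨fun a => f.1 a, fun a b h => Subtype.ext (f.2 a.2 b.2 h)⟩, fun a => f.1 a)
  have hsplit : Function.Injective split := by
    intro f g h
    refine Subtype.ext (funext fun a => ?_)
    by_cases ha : a ∈ s
    · exact DFunLike.congr_fun (congrArg Prod.fst h) ⟨a, ha⟩
    · exact congrFun (congrArg Prod.snd h) ⟨a, by simpa using ha⟩
  rw [← Fintype.card_subtype]
  calc _ ≤ _ := Fintype.card_le_of_injective split hsplit
    _ = _ := by simp [Fintype.card_embedding_eq]

theorem card_filter_injOn_le_of_le_card {s : Finset α} {m : ℕ} (hm : m ≤ #s) :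
    #{f : α → β | Set.InjOn f s} ≤
      (Fintype.card β).descFactorial m * Fintype.card β ^ (Fintype.card α - m) := by
  obtain ⟨t, hts, rfl⟩ := exists_subset_card_eq hm
  refine (card_le_card fun f hf => ?_).trans (card_filter_injOn_le t)
  simp only [mem_filter, mem_univ, true_and] at hf ⊢
  exact hf.mono (by exact_mod_cast hts)

end Counting

theorem Nat.descFactorial_le_pow_mul_pow {n k m : ℕ} (hkm : k ≤ m) :
    n.descFactorial m ≤ n ^ k * (n - k) ^ (m - k) := by
  rw [← Nat.descFactorial_mul_descFactorial hkm, mul_comm]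
  exact Nat.mul_le_mul (Nat.descFactorial_le_pow _ _) (Nat.descFactorial_le_pow _ _)

theorem Finset.card_eq_and_injOn_of_card_image_eq_of_subset {γ δ : Type*} [DecidableEq δ]
    {s t : Finset γ} {f : γ → δ} (hst : s ⊆ t) (h : #(s.image f) = #t) :
    #s = #t ∧ Set.InjOn f s := by
  have hs : #s = #t := le_antisymm (card_le_card hst) (h ▸ card_image_le)
  exact ⟨hs, injOn_of_card_image_eq (h.trans hs.symm)⟩

theorem card_image_comp_eq_and_injOn {α β γ δ : Type*} [Fintype α] [Fintype β]
    [DecidableEq γ] [DecidableEq δ] {x : α → β} {y : β → γ} {z : γ → δ}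
    (h : #(univ.image (z ∘ y ∘ x)) = #(univ.image y)) :
    #(univ.image (y ∘ x)) = #(univ.image y) ∧ Set.InjOn z (univ.image (y ∘ x)) := by
  classical
  refine card_eq_and_injOn_of_card_image_eq_of_subset ?_ (by rwa [image_image])
  rw [← image_image]
  exact image_subset_image (subset_univ _)

section Triples

variable {α β γ δ : Type*} [Fintype α] [Fintype β] [Fintype γ] [Fintype δ]
  [DecidableEq α] [DecidableEq β] [DecidableEq γ]

theorem card_filter_card_image_snd_le (k : ℕ) :
    #{p : (α → β) × (β → γ) × (γ → δ) | #(univ.image p.2.1) ≤ k} ≤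
      Fintype.card β ^ Fintype.card α * (2 ^ Fintype.card γ * k ^ Fintype.card β) *
        Fintype.card δ ^ Fintype.card γ := by
  have hprod :
      ({p : (α → β) × (β → γ) × (γ → δ) | #(univ.image p.2.1) ≤ k} : Finset _) =
      univ ×ˢ ({y : β → γ | #(univ.image y) ≤ k} : Finset _) ×ˢ univ := by
    ext p; simp
  rw [hprod, card_product, card_product, mul_assoc]
  gcongr
  · simp
  · exact card_filter_card_image_le k
  · simp

theorem card_filter_injOn_image_comp_le [DecidableEq δ] (m : ℕ) :
    #{p : (α → β) × (β → γ) × (γ → δ) |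
        m ≤ #(univ.image (p.2.1 ∘ p.1)) ∧ Set.InjOn p.2.2 (univ.image (p.2.1 ∘ p.1))} ≤
      Fintype.card β ^ Fintype.card α * Fintype.card γ ^ Fintype.card β *
        ((Fintype.card δ).descFactorial m * Fintype.card δ ^ (Fintype.card γ - m)) := by
  simp only [card_filter, Fintype.sum_prod_type]
  calc _ ≤ ∑ _x : α → β, ∑ _y : β → γ,
        (Fintype.card δ).descFactorial m * Fintype.card δ ^ (Fintype.card γ - m) := by
        gcongr with x _ y _
        rw [← card_filter]
        by_cases hm : m ≤ #(univ.image (y ∘ x))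
        · refine (card_le_card fun z hz => ?_).trans (card_filter_injOn_le_of_le_card hm)
          simp only [mem_filter, mem_univ, true_and] at hz ⊢
          exact hz.2
        · simp [hm]
    _ = _ := by simp only [sum_const, card_univ, Fintype.card_fun, smul_eq_mul, mul_assoc]

end Triples

-- `99/100` is any `ρ < 1` with `ρ ^ 8 ≥ 7/8` and `ρ ^ 5 ≥ 1/2`.
theorem seven_eighths_pow_le {n e : ℕ} (h : n ≤ 8 * e + 5) :
    (7 / 8 : ℝ) ^ e ≤ 2 * (99 / 100) ^ n := calc
  (7 / 8 : ℝ) ^ e ≤ ((99 / 100) ^ 8) ^ e := by gcongr; norm_num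
  _ ≤ 2 * (99 / 100) ^ 5 * (99 / 100) ^ (8 * e) := by rw [← pow_mul]; norm_num
  _ = 2 * (99 / 100) ^ (8 * e + 5) := by ring
  _ ≤ 2 * (99 / 100) ^ n :=
    mul_le_mul_of_nonneg_left (pow_le_pow_of_le_one (by norm_num) (by norm_num) h) (by norm_num)

theorem descFactorial_div_four_add_one_mul_pow_le {n : ℕ} (hn : 1 ≤ n) :
    ((n.descFactorial (n / 4 + 1) * n ^ (n - (n / 4 + 1)) : ℕ) : ℝ) ≤
      2 * (99 / 100) ^ n * n ^ n := by
  set m := n / 4 + 1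
  set k := (n + 7) / 8
  -- the factors `n - i` of `n.descFactorial m` with `k = ⌈n/8⌉ ≤ i < m` are at most `7n/8`
  have hkm : k ≤ m := by omega
  have hnat : 8 ^ (m - k) * (n.descFactorial m * n ^ (n - m)) ≤ 7 ^ (m - k) * n ^ n := calc
    _ ≤ 8 ^ (m - k) * (n ^ k * (n - k) ^ (m - k) * n ^ (n - m)) := by
        gcongr; exact Nat.descFactorial_le_pow_mul_pow hkm
    _ = (8 * (n - k)) ^ (m - k) * (n ^ k * n ^ (n - m)) := by ring
    _ ≤ (7 * n) ^ (m - k) * (n ^ k * n ^ (n - m)) := by gcongr ?_ ^ _ * _; omega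
    _ = 7 ^ (m - k) * n ^ n := by
        rw [mul_pow, mul_assoc, ← pow_add, ← pow_add]; congr 3; omega
  calc _ ≤ (7 : ℝ) ^ (m - k) * n ^ n / 8 ^ (m - k) :=
        (le_div_iff₀' (by positivity)).2 (by exact_mod_cast hnat)
    _ = (7 / 8) ^ (m - k) * n ^ n := by rw [div_pow]; ring
    _ ≤ _ := by gcongr; exact seven_eighths_pow_le (by omega)

theorem two_pow_mul_div_four_pow_le (n : ℕ) :
    ((2 ^ n * (n / 4) ^ n : ℕ) : ℝ) ≤ (99 / 100) ^ n * n ^ n := by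
  have hnat : 2 ^ n * (2 ^ n * (n / 4) ^ n) ≤ n ^ n := calc
    _ = (4 * (n / 4)) ^ n := by rw [← mul_assoc, ← mul_pow, ← mul_pow]; norm_num
    _ ≤ n ^ n := by gcongr; omega
  calc _ ≤ (n : ℝ) ^ n / 2 ^ n := (le_div_iff₀' (by positivity)).2 (by exact_mod_cast hnat)
    _ = (1 / 2) ^ n * n ^ n := by rw [div_pow, one_pow]; ring
    _ ≤ _ := mul_le_mul_of_nonneg_right (pow_le_pow_left₀ (by norm_num) (by norm_num) n)
        (by positivity)

/-- There are `c > 0` and `ρ ∈ (0,1)` such that for all `n ≥ 1` the number of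
triples `(x, y, z) ∈ T_n³` with `rank (xyz) = rank y` (products composed left
to right, so `xyz` is the function `z ∘ y ∘ x`) is at most `c·n^5·ρ^n·n^{3n}`;
hence the probability that three uniformly random transformations satisfy this
tends to `0` exponentially fast. -/
theorem stmt_19 :
    ∃ c : ℝ, 0 < c ∧ ∃ ρ : ℝ, 0 < ρ ∧ ρ < 1 ∧ ∀ n : ℕ, 1 ≤ n →
      (Nat.card {p : (Fin n → Fin n) × (Fin n → Fin n) × (Fin n → Fin n) //
          trank (p.2.2 ∘ p.2.1 ∘ p.1) = trank p.2.1} : ℝ)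
        ≤ c * (n : ℝ) ^ 5 * ρ ^ n * (n : ℝ) ^ (3 * n) := by
  refine ⟨3, by norm_num, 99 / 100, by norm_num, by norm_num, fun n hn => ?_⟩
  have hcover : ({p | trank (p.2.2 ∘ p.2.1 ∘ p.1) = trank p.2.1} : Finset _) ⊆
      ({p : (Fin n → Fin n) × (Fin n → Fin n) × (Fin n → Fin n) |
          #(univ.image p.2.1) ≤ n / 4} : Finset _) ∪
        ({p | n / 4 + 1 ≤ #(univ.image (p.2.1 ∘ p.1)) ∧
          Set.InjOn p.2.2 (univ.image (p.2.1 ∘ p.1))} : Finset _) := by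
    intro p hp
    obtain ⟨hcard, hinj⟩ := card_image_comp_eq_and_injOn (mem_filter.1 hp).2
    simp only [mem_union, mem_filter, mem_univ, true_and]
    by_cases hsmall : #(univ.image p.2.1) ≤ n / 4
    · exact .inl hsmall
    · exact .inr ⟨by omega, hinj⟩
  have hcount := (card_le_card hcover).trans ((card_union_le _ _).trans
    (add_le_add (card_filter_card_image_snd_le (n / 4)) (card_filter_injOn_image_comp_le _)))
  simp only [Fintype.card_fin] at hcount
  have hsmall := two_pow_mul_div_four_pow_le n
  have hlarge := descFactorial_div_four_add_one_mul_pow_le hn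
  rw [Nat.card_eq_fintype_card, Fintype.card_subtype]
  have hcount_real := (Nat.cast_le (α := ℝ)).2 hcount
  push_cast at hcount_real hsmall hlarge
  calc _ ≤ _ := hcount_real
    _ ≤ n ^ n * ((99 / 100) ^ n * n ^ n) * n ^ n +
          n ^ n * n ^ n * (2 * (99 / 100) ^ n * n ^ n) := by gcongr
    _ = 3 * 1 * (99 / 100) ^ n * n ^ (3 * n) := by ring
    _ ≤ _ := by gcongr; exact one_le_pow₀ (by exact_mod_cast hn)
end
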